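/- In an OCHA (H_c ⊕ H_o, 𝔩, 𝔫) with n_{p,0} = 0 for all p ≥ 1, the maps {n_{p,1}} make H_o into an L∞-module over (H_c, 𝔩): the OCHA relations with exactly one open-string input reduce to the defining relations of an L∞-module structure. -/

import Mathlib

noncomputable section
open scoped TensorProduct DirectSum
open TensorProduct DirectSum

/-- The sign `(-1)^d` for a parity `d : ZMod 2`. -/
def ksign (K : Type) [Field K] (d : ZMod 2) : K := if d = 0 then 1 else -1

section Basic
variable (K : Type) [Field K]
variable {M N : Type} [AddCommGroup M] [Module K M] [AddCommGroup N] [Module K N]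

/-- `σ^e` for a parity involution `σ`. -/
def pw (σ : M →ₗ[K] M) (e : ZMod 2) : M →ₗ[K] M := if e = 0 then LinearMap.id else σ

/-- `f : M → N` is homogeneous of degree `e` with respect to the parity involutions
`σM`, `σN` (describing the `ZMod 2`-gradings of `M` and `N`). -/
def IsDeg (σM : M →ₗ[K] M) (σN : N →ₗ[K] N) (e : ZMod 2) (f : M →ₗ[K] N) : Prop :=
  σN ∘ₗ f = ksign K e • (f ∘ₗ σM)

end Basic

section Coalg
variable (K : Type) [Field K]
variable {C : Type} [AddCommGroup C] [Module K C]

/-- `f` is a graded coderivation of degree `e` of the graded coalgebra `(C, Δ)`,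
where the grading of `C` is encoded by the parity involution `σ`:
`Δ ∘ f = (f ⊗ 1) ∘ Δ + (σ^e ⊗ f) ∘ Δ` (Koszul sign rule). -/
def IsCoderiv (σ : C →ₗ[K] C) (Δ : C →ₗ[K] C ⊗[K] C) (e : ZMod 2) (f : C →ₗ[K] C) : Prop :=
  IsDeg K σ σ e f ∧
    Δ ∘ₗ f = (TensorProduct.map f LinearMap.id + TensorProduct.map (pw K σ e) f) ∘ₗ Δ

end Coalg

section TensorCoalgebra
variable (K : Type) [Field K]
variable (A : Type) [AddCommGroup A] [Module K A]

/-- The `k`-th tensor power `A^{⊗ k}`. -/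
abbrev TP (k : ℕ) : Type := ⨂[K] _ : Fin k, A

/-- The underlying space `⊕_{k ≥ 0} A^{⊗ k}` of the tensor coalgebra `T^c A`. -/
abbrev Tca : Type := ⨁ k : ℕ, TP K A k

/-- Inclusion of the `k`-th tensor power into `T^c A`. -/
def inclT (k : ℕ) : TP K A k →ₗ[K] Tca K A := DirectSum.lof K ℕ (TP K A) k

/-- Projection of `T^c A` onto the `k`-th tensor power. -/
def prT (k : ℕ) : Tca K A →ₗ[K] TP K A k := DirectSum.component K ℕ (TP K A) k

/-- Transport along an equality of tensor-power sizes. -/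
def tpcast {a b : ℕ} (h : a = b) : TP K A a →ₗ[K] TP K A b := by subst h; exact LinearMap.id

/-- Concatenation `A^{⊗ p} ⊗ A^{⊗ q} → A^{⊗ (p+q)}`. -/
def mergeT (p q : ℕ) : (TP K A p ⊗[K] TP K A q) →ₗ[K] TP K A (p + q) :=
  (PiTensorProduct.reindex K (fun _ : Fin p ⊕ Fin q => A) finSumFinEquiv).toLinearMap ∘ₗ
    (PiTensorProduct.tmulEquiv K A).toLinearMap

/-- Deconcatenation `A^{⊗ (p+q)} → A^{⊗ p} ⊗ A^{⊗ q}`. -/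
def splitT (p q : ℕ) : TP K A (p + q) →ₗ[K] (TP K A p ⊗[K] TP K A q) :=
  (PiTensorProduct.tmulEquiv K A).symm.toLinearMap ∘ₗ
    (PiTensorProduct.reindex K (fun _ : Fin p ⊕ Fin q => A) finSumFinEquiv).symm.toLinearMap

/-- `A ≃ A^{⊗ 1}`. -/
def oneT : A ≃ₗ[K] TP K A 1 :=
  ((PiTensorProduct.subsingletonEquiv (0 : Fin 1) : (⨂[K] _ : Fin 1, A) ≃ₗ[K] A)).symm

/-- The deconcatenation coproduct
`Δ(a_1 ⊗ ⋯ ⊗ a_n) = ∑_{p=0}^n (a_1 ⊗ ⋯ ⊗ a_p) ⊗ (a_{p+1} ⊗ ⋯ ⊗ a_n)` on `T^c A`. -/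
def delT : Tca K A →ₗ[K] (Tca K A ⊗[K] Tca K A) :=
  DirectSum.toModule K ℕ _ fun n =>
    ∑ p ∈ Finset.range (n + 1),
      if h : p ≤ n then
        (TensorProduct.map (inclT K A p) (inclT K A (n - p))) ∘ₗ splitT K A p (n - p) ∘ₗ
          tpcast K A (by omega)
      else 0

/-- The operator `(σ^e)^{⊗ k}` on `A^{⊗ k}` (Koszul sign twist). -/
def twP (σ : A →ₗ[K] A) (e : ZMod 2) (k : ℕ) : TP K A k →ₗ[K] TP K A k :=
  PiTensorProduct.map fun _ => pw K σ e

/-- The parity involution of `T^c A` induced by the parity involution `σ` of `A`. -/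
def sigT (σ : A →ₗ[K] A) : Tca K A →ₗ[K] Tca K A :=
  DirectSum.toModule K ℕ _ fun n => inclT K A n ∘ₗ twP K A σ 1 n

/-- The `k`-th component of the corestriction `T^c A → A` of a map `θ : T^c A → T^c A`. -/
def coresT (θ : Tca K A →ₗ[K] Tca K A) (k : ℕ) : TP K A k →ₗ[K] A :=
  (oneT K A).symm.toLinearMap ∘ₗ prT K A 1 ∘ₗ θ ∘ₗ inclT K A k

/-- `1^{⊗ i} ⊗ g ⊗ 1^{⊗ (n-i-l)}` with the Koszul sign twist `(σ^e)^{⊗ i}` on the first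
`i` factors, for a map `g : A^{⊗ l} → A` of degree `e`, as a map `A^{⊗ n} → A^{⊗ (n-l+1)}`. -/
def insertAt (σ : A →ₗ[K] A) (e : ZMod 2) {l : ℕ} (g : TP K A l →ₗ[K] A)
    (n i : ℕ) (h : i + l ≤ n) : TP K A n →ₗ[K] TP K A (n - l + 1) :=
  tpcast K A (show i + (1 + (n - i - l)) = n - l + 1 by omega) ∘ₗ
  mergeT K A i (1 + (n - i - l)) ∘ₗ
  TensorProduct.map (twP K A σ e i)
    (mergeT K A 1 (n - i - l) ∘ₗ
      TensorProduct.map ((oneT K A).toLinearMap ∘ₗ g) LinearMap.id) ∘ₗ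
  TensorProduct.map LinearMap.id (splitT K A l (n - i - l)) ∘ₗ
  splitT K A i (l + (n - i - l)) ∘ₗ
  tpcast K A (show n = i + (l + (n - i - l)) by omega)

/-- The lift of a family of maps `m_k : A^{⊗ k} → A` (all of degree `e`)
to a coderivation of the tensor coalgebra `T^c A`. -/
def coderLift (σ : A →ₗ[K] A) (e : ZMod 2) (m : ∀ k, TP K A k →ₗ[K] A) :
    Tca K A →ₗ[K] Tca K A :=
  DirectSum.toModule K ℕ _ fun n =>
    ∑ i ∈ Finset.range (n + 1), ∑ l ∈ Finset.range (n + 1),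
      if h : i + l ≤ n then inclT K A (n - l + 1) ∘ₗ insertAt K A σ e (m l) n i h else 0

/-- The `n`-th (weak) `A_∞`-relation
`∑_{k+l=n+1} ∑_i ± m_k ∘ (1^{⊗(i-1)} ⊗ m_l ⊗ 1^{⊗(k-i)}) = 0` for a family of
degree one maps `m_k : A^{⊗ k} → A`, with Koszul signs. -/
def AInfRel (σ : A →ₗ[K] A) (m : ∀ k, TP K A k →ₗ[K] A) (n : ℕ) : Prop :=
  (∑ i ∈ Finset.range (n + 1), ∑ l ∈ Finset.range (n + 1),
    if h : i + l ≤ n then m (n - l + 1) ∘ₗ insertAt K A σ 1 (m l) n i h else 0) = 0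

end TensorCoalgebra
section LInfty
variable (K : Type) [Field K] [CharZero K]
variable (A : Type) [AddCommGroup A] [Module K A]

/-- Projection onto the degree-`e` part of `A` (grading encoded by the involution `σ`). -/
def projA (σ : A →ₗ[K] A) (e : ZMod 2) : A →ₗ[K] A :=
  (2⁻¹ : K) • (LinearMap.id + ksign K e • σ)

/-- Projection of `A^{⊗ n}` onto the multidegree-`d` part. -/
def projD (σ : A →ₗ[K] A) {n : ℕ} (d : Fin n → ZMod 2) : TP K A n →ₗ[K] TP K A n :=
  PiTensorProduct.map fun i => projA K A σ (d i)

/-- The Koszul sign of the permutation `s` on elements of degrees `d i`. -/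
def kz {n : ℕ} (s : Equiv.Perm (Fin n)) (d : Fin n → ZMod 2) : K :=
  ksign K (∑ p ∈ Finset.univ.filter
    (fun p : Fin n × Fin n => p.1 < p.2 ∧ s p.2 < s p.1), d p.1 * d p.2)

/-- The Koszul-signed action of the permutation `s` on `A^{⊗ n}`. -/
def permAct (σ : A →ₗ[K] A) {n : ℕ} (s : Equiv.Perm (Fin n)) : TP K A n →ₗ[K] TP K A n :=
  ∑ d : Fin n → ZMod 2, kz K s d •
    ((PiTensorProduct.reindex K (fun _ : Fin n => A) (s : Fin n ≃ Fin n)).toLinearMap ∘ₗ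
      projD K A σ d)

/-- The set of `(k, n-k)`-unshuffles: permutations `s` of `Fin n` which are
increasing on the first `k` and on the last `n - k` indices. -/
def Unsh (k n : ℕ) : Finset (Equiv.Perm (Fin n)) :=
  Finset.univ.filter fun s =>
    (∀ i j : Fin n, i < j → (j : ℕ) < k → s i < s j) ∧
    (∀ i j : Fin n, i < j → k ≤ (i : ℕ) → s i < s j)

/-- The `n`-th `L_∞`-relation
`∑_{k+l=n} ∑_{σ unshuffle} ± l_{1+l}(l_k(c_{σ(1)},…,c_{σ(k)}), c_{σ(k+1)},…,c_{σ(n)}) = 0`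
for a family of degree one graded symmetric maps `l_k : L^{⊗ k} → L`, with Koszul signs. -/
def LInfRel (σ : A →ₗ[K] A) (l : ∀ k, TP K A k →ₗ[K] A) (n : ℕ) : Prop :=
  (∑ k ∈ Finset.range (n + 1), ∑ s ∈ Unsh k n,
    if h : 1 ≤ k ∧ k ≤ n then
      l (n - k + 1) ∘ₗ insertAt K A σ 1 (l k) n 0 (by omega) ∘ₗ permAct K A σ s
    else 0) = 0

/-- The graded symmetrization operator on `T^c A`; its image is the graded
symmetric coalgebra `C(A) ⊂ T^c A`. -/
def symOp (σ : A →ₗ[K] A) : Tca K A →ₗ[K] Tca K A :=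
  DirectSum.toModule K ℕ _ fun n =>
    inclT K A n ∘ₗ (((n.factorial : K)⁻¹ • ∑ s : Equiv.Perm (Fin n), permAct K A σ s))

/-- Graded symmetry of a multilinear map `A^{⊗ k} → B` with respect to the
Koszul-signed permutation action. -/
def GSym {B : Type} [AddCommGroup B] [Module K B] (σ : A →ₗ[K] A) {k : ℕ}
    (f : TP K A k →ₗ[K] B) : Prop :=
  ∀ s : Equiv.Perm (Fin k), f ∘ₗ permAct K A σ s = f

end LInfty
section OCHA
variable (K : Type) [Field K] [CharZero K]
variable (Hc Ho : Type) [AddCommGroup Hc] [Module K Hc] [AddCommGroup Ho] [Module K Ho]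

/-- Contraction of `p` of the `n` closed inputs by `l_p`, summed over `(p, n-p)`-unshuffles
with Koszul signs: `Hc^{⊗ n} → Hc^{⊗ (n-p+1)}`. -/
def clCon (σc : Hc →ₗ[K] Hc) (l : ∀ k, TP K Hc k →ₗ[K] Hc) (p n : ℕ) (h : p ≤ n) :
    TP K Hc n →ₗ[K] TP K Hc (n - p + 1) :=
  ∑ s ∈ Unsh p n, insertAt K Hc σc 1 (l p) n 0 (by omega) ∘ₗ permAct K Hc σc s

/-- Projection of `Hc^{⊗ r}` onto its total-degree-`e` part. -/
def pcP (σ : Hc →ₗ[K] Hc) (r : ℕ) (e : ZMod 2) : TP K Hc r →ₗ[K] TP K Hc r :=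
  ∑ d ∈ Finset.univ.filter (fun d : Fin r → ZMod 2 => ∑ i, d i = e), projD K Hc σ d

/-- The Koszul-signed braiding `Hc^{⊗ r} ⊗ Ho^{⊗ i} → Ho^{⊗ i} ⊗ Hc^{⊗ r}`. -/
def sComm (σc : Hc →ₗ[K] Hc) (σo : Ho →ₗ[K] Ho) (r i : ℕ) :
    (TP K Hc r ⊗[K] TP K Ho i) →ₗ[K] (TP K Ho i ⊗[K] TP K Hc r) :=
  (TensorProduct.comm K _ _).toLinearMap ∘ₗ
    ∑ e : ZMod 2, TensorProduct.map (pcP K Hc σc r e) (twP K Ho σo e i)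

/-- The term `n_{n-p+1, m} ∘ (l_p ⊗ 1 ⊗ ⋯ ⊗ 1)` (summed over unshuffles, with Koszul
signs) of the OCHA relations, as a map `Hc^{⊗ n} ⊗ Ho^{⊗ m} → Ho`. -/
def termA (σc : Hc →ₗ[K] Hc) (l : ∀ k, TP K Hc k →ₗ[K] Hc)
    (N : ∀ p q, (TP K Hc p ⊗[K] TP K Ho q) →ₗ[K] Ho) (n m p : ℕ) (h : p ≤ n) :
    (TP K Hc n ⊗[K] TP K Ho m) →ₗ[K] Ho :=
  N (n - p + 1) m ∘ₗ TensorProduct.map (clCon K Hc σc l p n h) LinearMap.id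

/-- The operator inserting `n_{r,s}` (with `r = n - p` closed inputs chosen by an
unshuffle, `s` consecutive open inputs at position `i`) into a mixed word, with Koszul
signs: `Hc^{⊗ n} ⊗ Ho^{⊗ m} → Hc^{⊗ p} ⊗ Ho^{⊗ (i+1+j)}`, where `j = m - i - s`. -/
def mixedComp (σc : Hc →ₗ[K] Hc) (σo : Ho →ₗ[K] Ho)
    (N : ∀ p q, (TP K Hc p ⊗[K] TP K Ho q) →ₗ[K] Ho)
    (n m p i s : ℕ) (hp : p ≤ n) (his : i + s ≤ m) :
    (TP K Hc n ⊗[K] TP K Ho m) →ₗ[K]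
      (TP K Hc p ⊗[K] TP K Ho (i + 1 + (m - i - s))) :=
  -- abbreviations: r = n - p, j = m - i - s
  -- open side: Ho^{⊗ m} → O1 ⊗ (O2 ⊗ O3)
  let openSplit : TP K Ho m →ₗ[K]
      (TP K Ho i ⊗[K] (TP K Ho s ⊗[K] TP K Ho (m - i - s))) :=
    TensorProduct.map LinearMap.id (splitT K Ho s (m - i - s)) ∘ₗ
      splitT K Ho i (s + (m - i - s)) ∘ₗ tpcast K Ho (by omega)
  -- closed side: Hc^{⊗ n} → C1 ⊗ C2, summed over (p, r)-unshuffles with Koszul signs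
  let closedSplit : TP K Hc n →ₗ[K] (TP K Hc p ⊗[K] TP K Hc (n - p)) :=
    ∑ u ∈ Unsh p n, splitT K Hc p (n - p) ∘ₗ tpcast K Hc (by omega) ∘ₗ permAct K Hc σc u
  -- inner part: C2 ⊗ (O1 ⊗ (O2 ⊗ O3)) → Ho^{⊗ (i+1+j)}
  let inner : (TP K Hc (n - p) ⊗[K]
      (TP K Ho i ⊗[K] (TP K Ho s ⊗[K] TP K Ho (m - i - s)))) →ₗ[K]
      TP K Ho (i + 1 + (m - i - s)) :=
    tpcast K Ho (by omega) ∘ₗ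
    mergeT K Ho i (1 + (m - i - s)) ∘ₗ
    TensorProduct.map (twP K Ho σo 1 i)
      (mergeT K Ho 1 (m - i - s) ∘ₗ
        TensorProduct.map ((oneT K Ho).toLinearMap ∘ₗ N (n - p) s) LinearMap.id ∘ₗ
        (TensorProduct.assoc K _ _ _).symm.toLinearMap) ∘ₗ
    (TensorProduct.assoc K _ _ _).toLinearMap ∘ₗ
    TensorProduct.map (sComm K Hc Ho σc σo (n - p) i) LinearMap.id ∘ₗ
    (TensorProduct.assoc K _ _ _).symm.toLinearMap
  TensorProduct.map (twP K Hc σc 1 p) inner ∘ₗ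
    (TensorProduct.assoc K _ _ _).toLinearMap ∘ₗ
    TensorProduct.map closedSplit openSplit

/-- The term `± n_{p, i+1+j}(c…; o…, n_{r,s}(c…; o…), o…)` of the OCHA relations
(summed over `(p, r)`-unshuffles of the closed inputs, with Koszul signs), as a map
`Hc^{⊗ n} ⊗ Ho^{⊗ m} → Ho`; here `r = n - p` and `j = m - i - s`. -/
def termB (σc : Hc →ₗ[K] Hc) (σo : Ho →ₗ[K] Ho)
    (N : ∀ p q, (TP K Hc p ⊗[K] TP K Ho q) →ₗ[K] Ho)
    (n m p i s : ℕ) (hp : p ≤ n) (his : i + s ≤ m) :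
    (TP K Hc n ⊗[K] TP K Ho m) →ₗ[K] Ho :=
  N p (i + 1 + (m - i - s)) ∘ₗ mixedComp K Hc Ho σc σo N n m p i s hp his

/-- The OCHA compatibility relation at `(n, m)` closed/open inputs, as an identity of
maps `Hc^{⊗ n} ⊗ Ho^{⊗ m} → Ho`. -/
def mixedRel (σc : Hc →ₗ[K] Hc) (σo : Ho →ₗ[K] Ho)
    (l : ∀ k, TP K Hc k →ₗ[K] Hc)
    (N : ∀ p q, (TP K Hc p ⊗[K] TP K Ho q) →ₗ[K] Ho) (n m : ℕ) : Prop :=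
  ((∑ p ∈ Finset.range (n + 1),
      if h : 1 ≤ p ∧ p ≤ n then termA K Hc Ho σc l N n m p h.2 else 0) +
    ∑ p ∈ Finset.range (n + 1), ∑ i ∈ Finset.range (m + 1), ∑ s ∈ Finset.range (m + 1),
      if h : p ≤ n ∧ i + s ≤ m ∧ 1 ≤ (n - p) + s then
        termB K Hc Ho σc σo N n m p i s h.1 h.2.1
      else 0) = 0

/-- An open–closed homotopy algebra structure `(𝔩, 𝔫)` on `H = Hc ⊕ Ho`: the `L_∞`
relations on `Hc` together with the OCHA compatibility relations. -/
def IsOCHA (σc : Hc →ₗ[K] Hc) (σo : Ho →ₗ[K] Ho)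
    (l : ∀ k, TP K Hc k →ₗ[K] Hc)
    (N : ∀ p q, (TP K Hc p ⊗[K] TP K Ho q) →ₗ[K] Ho) : Prop :=
  (∀ n, LInfRel K Hc σc l n) ∧
    ∀ n m : ℕ, ¬(n = 0 ∧ m = 0) → mixedRel K Hc Ho σc σo l N n m

/-- The standing hypotheses on the structure maps of an OCHA: `σc, σo` are parity
involutions, `l_k` (`k ≥ 1`) are degree one and graded symmetric, and the `n_{p,q}`
(`(p,q) ≠ (0,0)`) are degree one and graded symmetric in the closed inputs. -/
def OCHAData (σc : Hc →ₗ[K] Hc) (σo : Ho →ₗ[K] Ho)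
    (l : ∀ k, TP K Hc k →ₗ[K] Hc)
    (N : ∀ p q, (TP K Hc p ⊗[K] TP K Ho q) →ₗ[K] Ho) : Prop :=
  σc ∘ₗ σc = LinearMap.id ∧ σo ∘ₗ σo = LinearMap.id ∧
  l 0 = 0 ∧ N 0 0 = 0 ∧
  (∀ k, IsDeg K (twP K Hc σc 1 k) σc 1 (l k)) ∧
  (∀ k, GSym K Hc σc (l k)) ∧
  (∀ p q, IsDeg K (TensorProduct.map (twP K Hc σc 1 p) (twP K Ho σo 1 q)) σo 1 (N p q)) ∧
  (∀ p q s, N p q ∘ₗ TensorProduct.map (permAct K Hc σc s) LinearMap.id = N p q)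

end OCHA

section LMod
variable (K : Type) [Field K] [CharZero K]
variable (Hc Ho : Type) [AddCommGroup Hc] [Module K Hc] [AddCommGroup Ho] [Module K Ho]

/-- The `n`-th defining relation of an `L_∞`-module structure `{k_p : Hc^{⊗p} ⊗ Ho → Ho}`
over the `L_∞`-algebra `(Hc, 𝔩)` (Lie module up to homotopy), with Koszul signs:
`∑ ± k_{1+r}(l_p(c…), c…; o) + ∑ ± k_p(c…; k_r(c…; o)) = 0`. -/
def LModRel (σc : Hc →ₗ[K] Hc) (l : ∀ k, TP K Hc k →ₗ[K] Hc)
    (k : ∀ p, (TP K Hc p ⊗[K] Ho) →ₗ[K] Ho) (n : ℕ) : Prop :=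
  ((∑ p ∈ Finset.range (n + 1),
      if h : 1 ≤ p ∧ p ≤ n then
        k (n - p + 1) ∘ₗ TensorProduct.map (clCon K Hc σc l p n h.2) LinearMap.id
      else 0) +
    ∑ p ∈ Finset.range (n + 1),
      if h : p ≤ n then
        k p ∘ₗ
          TensorProduct.map (twP K Hc σc 1 p) (k (n - p)) ∘ₗ
          (TensorProduct.assoc K _ _ _).toLinearMap ∘ₗ
          TensorProduct.map
            (∑ u ∈ Unsh p n,
              splitT K Hc p (n - p) ∘ₗ tpcast K Hc (by omega) ∘ₗ permAct K Hc σc u)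
            LinearMap.id
      else 0) = 0

end LMod

/-!
Precompose the OCHA relation with `n` closed and one open input by `Ho ≃ Ho^{⊗ 1}`. Its
`l`-terms are literally those of the `L_∞`-module relation for `k_p = n_{p,1}`. Among its
`n`-terms `n_{p, i+1+j}(…, n_{r,s}(…), …)` with `i + s ≤ 1`, those with `s = 0` contain
`n_{r,0}` with `r ≥ 1` and vanish by hypothesis, and the one remaining, `i = 0, s = 1`, is
`k_p(c…; k_r(c…; o))`.
-/

section TensorPower
variable (K : Type) [Field K] {A : Type} [AddCommGroup A] [Module K A]

lemma mergeT_tprod (p q : ℕ) (f : Fin p → A) (g : Fin q → A) :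
    mergeT K A p q (PiTensorProduct.tprod K f ⊗ₜ PiTensorProduct.tprod K g)
      = PiTensorProduct.tprod K (Fin.append f g) := by
  simp only [mergeT, LinearMap.coe_comp, LinearEquiv.coe_coe, Function.comp_apply,
    PiTensorProduct.tmulEquiv_apply, PiTensorProduct.reindex_tprod]
  congr 1
  ext i
  induction i using Fin.addCases <;> simp

lemma splitT_mergeT (p q : ℕ) (x : TP K A p ⊗[K] TP K A q) :
    splitT K A p q (mergeT K A p q x) = x := by
  simp only [splitT, mergeT, LinearMap.coe_comp, LinearEquiv.coe_coe, Function.comp_apply,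
    LinearEquiv.symm_apply_apply]

lemma splitT_tprod (p q : ℕ) (f : Fin (p + q) → A) :
    splitT K A p q (PiTensorProduct.tprod K f)
      = PiTensorProduct.tprod K (fun i => f (Fin.castAdd q i)) ⊗ₜ
        PiTensorProduct.tprod K (fun i => f (Fin.natAdd p i)) := by
  rw [← splitT_mergeT K p q (_ ⊗ₜ _), mergeT_tprod, Fin.append_castAdd_natAdd]

lemma tpcast_tprod {a b : ℕ} (h : a = b) (f : Fin a → A) :
    tpcast K A h (PiTensorProduct.tprod K f) = PiTensorProduct.tprod K (f ∘ Fin.cast h.symm) := by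
  subst h
  rfl

lemma oneT_apply (a : A) : oneT K A a = PiTensorProduct.tprod K (fun _ : Fin 1 => a) := by
  rw [oneT, LinearEquiv.symm_apply_eq]
  exact (PiTensorProduct.subsingletonEquiv_apply_tprod (R := K) (0 : Fin 1) (fun _ => a)).symm

lemma twP_zero (σ : A →ₗ[K] A) (e : ZMod 2) : twP K A σ e 0 = LinearMap.id := by
  ext f
  simp only [twP, LinearMap.compMultilinearMap_apply, PiTensorProduct.map_tprod,
    LinearMap.id_coe, id_eq]
  congr 1
  exact Subsingleton.elim _ _

end TensorPower

section Parity
variable (K : Type) [Field K] [CharZero K] {A : Type} [AddCommGroup A] [Module K A]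

lemma sum_projA (σ : A →ₗ[K] A) : ∑ e : ZMod 2, projA K A σ e = LinearMap.id := by
  rw [show (Finset.univ : Finset (ZMod 2)) = {0, 1} from rfl, Finset.sum_pair zero_ne_one]
  ext x
  simp only [projA, ksign, ↓reduceIte, one_smul, smul_add, one_ne_zero, neg_smul, smul_neg,
    LinearMap.add_apply, LinearMap.smul_apply, LinearMap.id_coe, id_eq, LinearMap.neg_apply]
  module

lemma sum_projD (σ : A →ₗ[K] A) (r : ℕ) :
    ∑ d : Fin r → ZMod 2, projD K A σ d = LinearMap.id := by
  have h := (PiTensorProduct.mapMultilinear K (fun _ : Fin r => A) (fun _ => A)).map_sum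
    (fun _ e => projA K A σ e)
  simp only [PiTensorProduct.mapMultilinear_apply, sum_projA, PiTensorProduct.map_id] at h
  exact h.symm

lemma sum_pcP (σ : A →ₗ[K] A) (r : ℕ) : ∑ e : ZMod 2, pcP K A σ r e = LinearMap.id := by
  rw [← sum_projD K σ r, ← Finset.sum_fiberwise _ (fun d : Fin r → ZMod 2 => ∑ i, d i)]
  rfl

end Parity

section OneOpenInput
variable (K : Type) [Field K]
variable {Hc Ho : Type} [AddCommGroup Hc] [Module K Hc] [AddCommGroup Ho] [Module K Ho]
variable (σc : Hc →ₗ[K] Hc) (σo : Ho →ₗ[K] Ho) (N : ∀ p q, (TP K Hc p ⊗[K] TP K Ho q) →ₗ[K] Ho)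

def unshuffleSplit (p n : ℕ) (h : p ≤ n) : TP K Hc n →ₗ[K] TP K Hc p ⊗[K] TP K Hc (n - p) :=
  ∑ u ∈ Unsh p n, splitT K Hc p (n - p) ∘ₗ tpcast K Hc (by omega) ∘ₗ permAct K Hc σc u

/-- `k_p := n_{p,1}`, with `Ho` read as `Ho^{⊗ 1}`. -/
def oneOpenMap (p : ℕ) : (TP K Hc p ⊗[K] Ho) →ₗ[K] Ho :=
  N p 1 ∘ₗ TensorProduct.map LinearMap.id (oneT K Ho).toLinearMap

lemma sComm_zero [CharZero K] (r : ℕ) :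
    sComm K Hc Ho σc σo r 0 = (TensorProduct.comm K (TP K Hc r) (TP K Ho 0)).toLinearMap := by
  have hid : ∑ e : ZMod 2, TensorProduct.map (pcP K Hc σc r e) (LinearMap.id : TP K Ho 0 →ₗ[K] _)
      = LinearMap.id := by
    rw [← LinearMap.rTensor_id, ← sum_pcP K σc r]
    exact (map_sum (LinearMap.rTensorHom (TP K Ho 0)) _ _).symm
  simp only [sComm, twP_zero, hid, LinearMap.comp_id]

/-- With no open input to the left of the inserted `n_{r,1}`, the Koszul braiding past
`Ho^{⊗ 0}` is the plain swap (`sComm_zero`), so only a reshuffling of tensor factors is left. -/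
lemma mixedComp_zero_one_comp_oneT [CharZero K] (n p : ℕ) (hp : p ≤ n) :
    mixedComp K Hc Ho σc σo N n 1 p 0 1 hp le_rfl ∘ₗ
        TensorProduct.map LinearMap.id (oneT K Ho).toLinearMap =
      TensorProduct.map (twP K Hc σc 1 p) ((oneT K Ho).toLinearMap ∘ₗ oneOpenMap K N (n - p)) ∘ₗ
        (TensorProduct.assoc K _ _ _).toLinearMap ∘ₗ
        TensorProduct.map (unshuffleSplit K σc p n hp) LinearMap.id := by
  apply TensorProduct.ext'
  intro x o
  have hsplit : ∑ u ∈ Unsh p n,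
      splitT K Hc p (n - p) ∘ₗ tpcast K Hc (by omega) ∘ₗ permAct K Hc σc u =
        unshuffleSplit K σc p n hp := rfl
  simp only [mixedComp, hsplit, sComm_zero, twP_zero, LinearMap.comp_apply,
    TensorProduct.map_tmul, LinearMap.id_apply]
  generalize unshuffleSplit K σc p n hp x = w
  induction w using TensorProduct.induction_on with
  | zero => simp only [TensorProduct.zero_tmul, map_zero]
  | tmul w₁ w₂ =>
    simp only [oneOpenMap, oneT_apply, tpcast_tprod, splitT_tprod, mergeT_tprod,
      LinearMap.comp_apply, TensorProduct.map_tmul, LinearEquiv.coe_coe, LinearMap.id_apply,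
      TensorProduct.assoc_tmul, TensorProduct.assoc_symm_tmul, TensorProduct.comm_tmul]
    congr 2
    funext i
    fin_cases i
    rfl
  | add w w' hw hw' => simp only [TensorProduct.add_tmul, map_add, hw, hw']

lemma termA_comp_oneT (l : ∀ k, TP K Hc k →ₗ[K] Hc) (n p : ℕ) (hp : p ≤ n) :
    termA K Hc Ho σc l N n 1 p hp ∘ₗ TensorProduct.map LinearMap.id (oneT K Ho).toLinearMap =
      oneOpenMap K N (n - p + 1) ∘ₗ TensorProduct.map (clCon K Hc σc l p n hp) LinearMap.id := by
  simp only [termA, oneOpenMap, LinearMap.comp_assoc, ← TensorProduct.map_comp,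
    LinearMap.id_comp, LinearMap.comp_id]

lemma termB_eq_zero (n m p i : ℕ) (hp : p ≤ n) (hi : i + 0 ≤ m) (hN : N (n - p) 0 = 0) :
    termB K Hc Ho σc σo N n m p i 0 hp hi = 0 := by
  simp only [termB, mixedComp, hN, LinearMap.comp_zero, LinearMap.zero_comp,
    TensorProduct.map_zero_left, TensorProduct.map_zero_right]

lemma termB_zero_one_comp_oneT [CharZero K] (n p : ℕ) (hp : p ≤ n) :
    termB K Hc Ho σc σo N n 1 p 0 1 hp le_rfl ∘ₗ
        TensorProduct.map LinearMap.id (oneT K Ho).toLinearMap =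
      oneOpenMap K N p ∘ₗ TensorProduct.map (twP K Hc σc 1 p) (oneOpenMap K N (n - p)) ∘ₗ
        (TensorProduct.assoc K _ _ _).toLinearMap ∘ₗ
        TensorProduct.map (unshuffleSplit K σc p n hp) LinearMap.id := by
  have hfactor : TensorProduct.map (twP K Hc σc 1 p) ((oneT K Ho).toLinearMap ∘ₗ
      oneOpenMap K N (n - p)) = TensorProduct.map LinearMap.id (oneT K Ho).toLinearMap ∘ₗ
        TensorProduct.map (twP K Hc σc 1 p) (oneOpenMap K N (n - p)) := by
    rw [← TensorProduct.map_comp, LinearMap.id_comp]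
  rw [termB, LinearMap.comp_assoc, mixedComp_zero_one_comp_oneT, hfactor]
  rfl

lemma sum_termB_one_open (n p : ℕ) (hp : p ≤ n) (hN : ∀ q, 1 ≤ q → N q 0 = 0) :
    (∑ i ∈ Finset.range (1 + 1), ∑ s ∈ Finset.range (1 + 1),
      if h : p ≤ n ∧ i + s ≤ 1 ∧ 1 ≤ (n - p) + s then termB K Hc Ho σc σo N n 1 p i s h.1 h.2.1
      else 0) = termB K Hc Ho σc σo N n 1 p 0 1 hp le_rfl := by
  have hs0 : ∀ i, (if h : p ≤ n ∧ i + 0 ≤ 1 ∧ 1 ≤ (n - p) + 0 then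
      termB K Hc Ho σc σo N n 1 p i 0 h.1 h.2.1 else 0) = 0 := fun i =>
    dite_eq_right_iff.2 fun h => termB_eq_zero K σc σo N n 1 p i h.1 h.2.1 (hN _ h.2.2)
  simp only [Finset.sum_range_succ, Finset.sum_range_zero]
  rw [hs0, hs0, dif_pos (⟨hp, le_rfl, by omega⟩ : p ≤ n ∧ 0 + 1 ≤ 1 ∧ 1 ≤ n - p + 1),
    dif_neg (by omega : ¬(p ≤ n ∧ 1 + 1 ≤ 1 ∧ 1 ≤ n - p + 1))]
  simp only [zero_add, add_zero]

theorem lModRel_of_mixedRel_one [CharZero K] (l : ∀ k, TP K Hc k →ₗ[K] Hc) (n : ℕ)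
    (hrel : mixedRel K Hc Ho σc σo l N n 1) (hN : ∀ p, 1 ≤ p → N p 0 = 0) :
    LModRel K Hc Ho σc l (oneOpenMap K N) n := by
  unfold mixedRel at hrel
  unfold LModRel
  have hsum : ∀ {α : Type} (s : Finset α) (f : α → (TP K Hc n ⊗[K] TP K Ho 1) →ₗ[K] Ho),
      (∑ a ∈ s, f a) ∘ₗ TensorProduct.map LinearMap.id (oneT K Ho).toLinearMap =
        ∑ a ∈ s, f a ∘ₗ TensorProduct.map LinearMap.id (oneT K Ho).toLinearMap :=
    fun s f => map_sum (LinearMap.lcomp K Ho _) f s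
  have hrel' := congrArg (· ∘ₗ TensorProduct.map LinearMap.id (oneT K Ho).toLinearMap) hrel
  rw [LinearMap.add_comp, LinearMap.zero_comp, hsum, hsum] at hrel'
  convert hrel' using 2 <;> refine Finset.sum_congr rfl fun p hp => ?_
  · split_ifs with h
    · exact (termA_comp_oneT K σc N l n p h.2).symm
    · exact (LinearMap.zero_comp _).symm
  · have hpn : p ≤ n := Nat.lt_succ_iff.mp (Finset.mem_range.mp hp)
    rw [dif_pos hpn, sum_termB_one_open K σc σo N n p hpn hN, termB_zero_one_comp_oneT]
    rfl

end OneOpenInput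

theorem ocha_gives_lInfinity_module_general
    (K : Type) [Field K] [CharZero K]
    (Hc Ho : Type) [AddCommGroup Hc] [Module K Hc] [AddCommGroup Ho] [Module K Ho]
    (σc : Hc →ₗ[K] Hc) (σo : Ho →ₗ[K] Ho)
    (l : ∀ k, TP K Hc k →ₗ[K] Hc)
    (N : ∀ p q, (TP K Hc p ⊗[K] TP K Ho q) →ₗ[K] Ho)
    (hocha : IsOCHA K Hc Ho σc σo l N)
    (hN0 : ∀ p, 1 ≤ p → N p 0 = 0) :
    ∀ n, LModRel K Hc Ho σc l
      (fun p => N p 1 ∘ₗ TensorProduct.map LinearMap.id (oneT K Ho).toLinearMap) n :=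
  fun n => lModRel_of_mixedRel_one K σc σo N l n (hocha.2 n 1 (by simp)) hN0

theorem ocha_gives_lInfinity_module
    (K : Type) [Field K] [CharZero K]
    (Hc Ho : Type) [AddCommGroup Hc] [Module K Hc] [AddCommGroup Ho] [Module K Ho]
    (σc : Hc →ₗ[K] Hc) (σo : Ho →ₗ[K] Ho)
    (l : ∀ k, TP K Hc k →ₗ[K] Hc)
    (N : ∀ p q, (TP K Hc p ⊗[K] TP K Ho q) →ₗ[K] Ho)
    (hdata : OCHAData K Hc Ho σc σo l N)
    (hocha : IsOCHA K Hc Ho σc σo l N)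
    (hN0 : ∀ p, 1 ≤ p → N p 0 = 0) :
    ∀ n, LModRel K Hc Ho σc l
      (fun p => N p 1 ∘ₗ TensorProduct.map LinearMap.id (oneT K Ho).toLinearMap) n :=
  ocha_gives_lInfinity_module_general K Hc Ho σc σo l N hocha hN0
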